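/- arXiv:2411.06339 — 4 statements merged into one kernel-verified Lean document; each statement's English description precedes it below -/
import Mathlib

section
/- Let W₁ : 𝒳 → 𝒴 and W₂ : 𝒳 → 𝒵 be two discrete memoryless channels with common finite input alphabet 𝒳 of cardinality 2^q and a common input distribution P_X, where the input symbol is labeled by a bijection X = f(B¹,…,B^q). For each bit-level l ∈ {1,…,q}, consider the equivalent binary-input sub-channels W₁^l : B^l → (Y, B^{[l−1]}) and W₂^l : B^l → (Z, B^{[l−1]}). If W₂ ⪯ W₁, then W₂^l ⪯ W₁^l for every l ∈ {1,…,q}. -/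
open scoped BigOperators Classical
open Filter Topology

noncomputable section

namespace PolarWiretap

variable {Ω α γ 𝒱 : Type*}

/-- Probability mass assigned by the weight function `p` to the value `a`
of the random variable `X` (the distribution of `X`). -/
def dist [Fintype Ω] (p : Ω → ℝ) (X : Ω → α) (a : α) : ℝ :=
  ∑ ω, if X ω = a then p ω else 0

/-- Probability of the event `E` under the weight function `p`. -/
def pr [Fintype Ω] (p : Ω → ℝ) (E : Ω → Prop) : ℝ :=
  ∑ ω, if E ω then p ω else 0

/-- Shannon entropy (in bits) of the random variable `X` under `p`. -/
def H [Fintype Ω] [Fintype α] (p : Ω → ℝ) (X : Ω → α) : ℝ :=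
  ∑ a, -(dist p X a * Real.logb 2 (dist p X a))

/-- Conditional Shannon entropy `H(X|Y) = H(X,Y) − H(Y)` (in bits). -/
def condH [Fintype Ω] [Fintype α] [Fintype γ] (p : Ω → ℝ) (X : Ω → α) (Y : Ω → γ) : ℝ :=
  H p (fun ω => (X ω, Y ω)) - H p Y

/-- Mutual information `I(X;Y) = H(X) + H(Y) − H(X,Y)` (in bits). -/
def MI [Fintype Ω] [Fintype α] [Fintype γ] (p : Ω → ℝ) (X : Ω → α) (Y : Ω → γ) : ℝ :=
  H p X + H p Y - H p (fun ω => (X ω, Y ω))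

/-- Bhattacharyya parameter
`Z_B(T|V) = 2 ∑_v √(P_{T,V}(0,v) · P_{T,V}(1,v))` of a binary random variable `T`
given the side information `V`. -/
def ZB [Fintype Ω] [Fintype 𝒱] (p : Ω → ℝ) (T : Ω → ZMod 2) (V : Ω → 𝒱) : ℝ :=
  2 * ∑ v, Real.sqrt (dist p (fun ω => (T ω, V ω)) (0, v) *
      dist p (fun ω => (T ω, V ω)) (1, v))

/-- `p` is a probability mass function on the finite type `Ω`. -/
def IsPMF [Fintype Ω] (p : Ω → ℝ) : Prop := (∀ ω, 0 ≤ p ω) ∧ ∑ ω, p ω = 1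

/-- `W` is a (discrete memoryless) channel: a stochastic matrix. -/
def IsChannel {𝒳 𝒴 : Type*} [Fintype 𝒴] (W : 𝒳 → 𝒴 → ℝ) : Prop :=
  (∀ x y, 0 ≤ W x y) ∧ ∀ x, ∑ y, W x y = 1

/-- `W₂` is degraded with respect to `W₁` (`W₂ ⪯ W₁`): there is a channel `W̃`
with `W₂(z|x) = ∑_y W₁(y|x)·W̃(z|y)`. -/
def Degraded {𝒳 𝒴 𝒵 : Type*} [Fintype 𝒴] [Fintype 𝒵]
    (W₂ : 𝒳 → 𝒵 → ℝ) (W₁ : 𝒳 → 𝒴 → ℝ) : Prop :=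
  ∃ Wt : 𝒴 → 𝒵 → ℝ, IsChannel Wt ∧ ∀ x z, W₂ x z = ∑ y, W₁ x y * Wt y z

/-- The binary entropy function `h₂(x) = −x log₂ x − (1−x) log₂ (1−x)`. -/
def h2 (x : ℝ) : ℝ := -(x * Real.logb 2 x) - (1 - x) * Real.logb 2 (1 - x)

/-- The single-letter joint distribution of an input `X ~ P_X` and the output of
the channel `W` fed with `X`: `P(x,y) = P_X(x)·W(y|x)`. -/
def slP {𝒳 𝒴 : Type*} (PX : 𝒳 → ℝ) (W : 𝒳 → 𝒴 → ℝ) : 𝒳 × 𝒴 → ℝ :=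
  fun a => PX a.1 * W a.1 a.2


/-- The equivalent binary-input sub-channel at bit-level `l` of the channel `W`,
for input distribution `P_X` and bit labeling `f`:
`W^l(y, b^{[l−1]} | b^l) = P_{Y, B^{[l−1]} | B^l}(y, b^{[l−1]} | b^l)`. -/
def subCh {𝒳 𝒴 : Type*} [Fintype 𝒳] {q : ℕ} (PX : 𝒳 → ℝ)
    (f : (Fin q → ZMod 2) ≃ 𝒳) (W : 𝒳 → 𝒴 → ℝ) (l : Fin q)
    (bl : ZMod 2) (out : 𝒴 × ({k : Fin q // k < l} → ZMod 2)) : ℝ :=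
  (∑ b : Fin q → ZMod 2,
      if b l = bl ∧ (∀ k : {k : Fin q // k < l}, b k.1 = out.2 k)
      then PX (f b) * W (f b) out.1 else 0) /
    (∑ b : Fin q → ZMod 2, if b l = bl then PX (f b) else 0)

/-- **(Lemma 1) Degradation is inherited by the bit-level sub-channels.**
Let `W₁ : 𝒳 → 𝒴` and `W₂ : 𝒳 → 𝒵` be two DMCs with common finite input
alphabet `𝒳` of cardinality `2^q` (labeled by the bijection `f`) and common
input distribution `P_X`.  If `W₂ ⪯ W₁` then, for every bit-level `l`, the
sub-channel `W₂^l : B^l → (Z, B^{[l−1]})` is degraded with respect to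
`W₁^l : B^l → (Y, B^{[l−1]})`. -/
theorem subchannel_degraded {𝒳 𝒴 𝒵 : Type*} [Fintype 𝒳] [Fintype 𝒴] [Fintype 𝒵]
    {q : ℕ} (f : (Fin q → ZMod 2) ≃ 𝒳) (PX : 𝒳 → ℝ) (hPX : IsPMF PX)
    (W₁ : 𝒳 → 𝒴 → ℝ) (W₂ : 𝒳 → 𝒵 → ℝ)
    (hW₁ : IsChannel W₁) (hW₂ : IsChannel W₂)
    (hdeg : Degraded W₂ W₁) (l : Fin q) :
    Degraded (subCh PX f W₂ l) (subCh PX f W₁ l) := by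
  obtain ⟨Wt, ⟨hWtnn, hWtsum⟩, hWt⟩ := hdeg
  refine ⟨fun yb zb => Wt yb.1 zb.1 * (if zb.2 = yb.2 then 1 else 0), ⟨?_, ?_⟩, ?_⟩
  · intro x y
    have := hWtnn x.1 y.1
    positivity
  · intro x
    rw [Fintype.sum_prod_type]
    have : ∀ z : 𝒵, ∑ t : {k : Fin q // k < l} → ZMod 2,
        Wt x.1 z * (if t = x.2 then (1:ℝ) else 0) = Wt x.1 z := by
      intro z
      rw [← Finset.mul_sum, Finset.sum_ite_eq' Finset.univ x.2 (fun _ => (1:ℝ))]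
      simp
    simp only [this]
    exact hWtsum x.1
  · intro bl out
    obtain ⟨z, bp⟩ := out
    rw [Fintype.sum_prod_type]
    simp only [mul_ite, mul_one, mul_zero]
    have step1 : ∀ y : 𝒴, (∑ t : {k : Fin q // k < l} → ZMod 2,
        if bp = t then subCh PX f W₁ l bl (y, t) * Wt y z else 0)
        = subCh PX f W₁ l bl (y, bp) * Wt y z := by
      intro y
      rw [Finset.sum_ite_eq Finset.univ bp
        (fun t => subCh PX f W₁ l bl (y, t) * Wt y z)]
      simp
    simp only [step1]
    unfold subCh
    simp only [div_mul_eq_mul_div]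
    rw [← Finset.sum_div]
    congr 1
    calc (∑ b : Fin q → ZMod 2,
          if b l = bl ∧ (∀ k : {k : Fin q // k < l}, b k.1 = bp k)
          then PX (f b) * W₂ (f b) z else 0)
        = ∑ b : Fin q → ZMod 2, ∑ y : 𝒴,
            (if b l = bl ∧ (∀ k : {k : Fin q // k < l}, b k.1 = bp k)
             then PX (f b) * (W₁ (f b) y * Wt y z) else 0) := by
          refine Finset.sum_congr rfl fun b _ => ?_
          split
          · rw [← Finset.mul_sum, ← hWt]
          · simp
      _ = ∑ y : 𝒴, ∑ b : Fin q → ZMod 2,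
            (if b l = bl ∧ (∀ k : {k : Fin q // k < l}, b k.1 = bp k)
             then PX (f b) * (W₁ (f b) y * Wt y z) else 0) := Finset.sum_comm
      _ = ∑ y : 𝒴, (∑ b : Fin q → ZMod 2,
            if b l = bl ∧ (∀ k : {k : Fin q // k < l}, b k.1 = bp k)
            then PX (f b) * W₁ (f b) y else 0) * Wt y z := by
          refine Finset.sum_congr rfl fun y _ => ?_
          rw [Finset.sum_mul]
          refine Finset.sum_congr rfl fun b _ => ?_
          split <;> simp [mul_assoc]

end PolarWiretap

end
end

section
/- In the proposed coding scheme over a degraded wiretap channel (W₂ ⪯ W₁), with message bits U_𝓐 = M, frozen bits U_𝓕 = 0, uniform random bits U_𝓡 independent of M, and shaping bits U_𝓓 determined by the other bits, suppose the conditional entropy bound H(U_𝓡 | Z, U_𝓐) ≤ h₂(c·2^{−N^{β′}}) + c·|𝓡|·2^{−N^{β′}} holds for a constant c > 0 and 0 < β′ < β < 1/2. Then the information leaked to Eve satisfies I(M; Z) ≤ N·I(X;Z) − |𝓡| + h₂(c·2^{−N^{β′}}) + c·|𝓡|·2^{−N^{β′}}, where (X,Z) is a single-letter input–output pair of W₂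 with input distribution P_X. -/
open scoped BigOperators Classical
open Filter Topology

noncomputable section

namespace PolarWiretap

variable {Ω α γ 𝒱 : Type*}

/-! Put `T = (M, U_𝓡)`. The chain rule gives `I(M;Z) = I(T;Z) - H(U_𝓡 | M) + H(U_𝓡 | Z, M)`,
and `H(U_𝓡 | M) = |𝓡|` because `U_𝓡` is uniform and independent of `M`. Since the channel is
memoryless, `H(Z | T) = ∑ᵢ H(Zᵢ | Xᵢ)`, while `H(Z) ≤ ∑ᵢ H(Zᵢ)` by Gibbs' inequality against the
product of the marginals; hence `I(T;Z) ≤ ∑ᵢ I(Xᵢ;Zᵢ) = N·I(X;Z)`, every `(Xᵢ, Zᵢ)` having the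
single-letter law `P_X(x)·W₂(z|x)`. The assumed bound on `H(U_𝓡 | Z, M)` does the rest. -/

section Entropy

variable [Fintype Ω] (p : Ω → ℝ) {β : Type*}

lemma sum_dist_mul [Fintype α] (X : Ω → α) (f : α → ℝ) :
    ∑ a, dist p X a * f a = ∑ ω, p ω * f (X ω) := by
  simp only [dist, Finset.sum_mul]
  rw [Finset.sum_comm]
  refine Finset.sum_congr rfl fun ω _ => ?_
  simp [ite_mul]

lemma sum_dist [Fintype α] (X : Ω → α) : ∑ a, dist p X a = ∑ ω, p ω := by
  simpa using sum_dist_mul p X fun _ => 1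

lemma dist_comp [Fintype α] (X : Ω → α) (f : α → β) (b : β) :
    dist p (fun ω => f (X ω)) b = ∑ a, dist p X a * if f a = b then 1 else 0 := by
  rw [sum_dist_mul]
  simp [dist]

lemma dist_fst [Fintype γ] (X : Ω → α) (Y : Ω → γ) (a : α) :
    dist p X a = ∑ c, dist p (fun ω => (X ω, Y ω)) (a, c) := by
  simp only [dist]
  rw [Finset.sum_comm]
  refine Finset.sum_congr rfl fun ω _ => ?_
  by_cases h : X ω = a <;> simp [h, Prod.ext_iff]

lemma dist_snd [Fintype α] (X : Ω → α) (Y : Ω → γ) (c : γ) :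
    dist p Y c = ∑ a, dist p (fun ω => (X ω, Y ω)) (a, c) := by
  simp only [dist]
  rw [Finset.sum_comm]
  refine Finset.sum_congr rfl fun ω _ => ?_
  by_cases h : Y ω = c <;> simp [h, Prod.ext_iff]

lemma dist_comp_equiv (e : α ≃ β) (X : Ω → α) (b : β) :
    dist p (fun ω => e (X ω)) b = dist p X (e.symm b) := by
  refine Finset.sum_congr rfl fun ω _ => ?_
  simp [← Equiv.eq_symm_apply]

lemma H_eq_sum [Fintype α] (X : Ω → α) :
    H p X = ∑ ω, p ω * -Real.logb 2 (dist p X (X ω)) := by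
  rw [H, ← sum_dist_mul p X fun a => -Real.logb 2 (dist p X a)]
  exact Finset.sum_congr rfl fun a _ => by ring

lemma H_congr {Ω' : Type*} [Fintype Ω'] [Fintype α] {q : Ω' → ℝ} {X : Ω → α} {Y : Ω' → α}
    (h : ∀ a, dist p X a = dist q Y a) : H p X = H q Y := by
  simp only [H, h]

lemma H_comp_equiv [Fintype α] [Fintype β] (e : α ≃ β) (X : Ω → α) :
    H p (fun ω => e (X ω)) = H p X := by
  refine (Fintype.sum_equiv e _ _ fun a => ?_).symm
  rw [dist_comp_equiv, e.symm_apply_apply]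

lemma MI_congr {Ω' : Type*} [Fintype Ω'] [Fintype α] [Fintype γ] {q : Ω' → ℝ}
    {X : Ω → α} {Y : Ω → γ} {X' : Ω' → α} {Y' : Ω' → γ}
    (h : ∀ ac, dist p (fun ω => (X ω, Y ω)) ac = dist q (fun ω => (X' ω, Y' ω)) ac) :
    MI p X Y = MI q X' Y' := by
  rw [MI, MI, H_congr p h, H_congr p (q := q) (Y := X') fun a => by
      rw [dist_fst p X Y, dist_fst q X' Y']; simp only [h],
    H_congr p (q := q) (Y := Y') fun c => by
      rw [dist_snd p X Y, dist_snd q X' Y']; simp only [h]]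

lemma MI_eq_MI_pair_sub_add_condH [Fintype α] [Fintype β] [Fintype γ]
    (X : Ω → α) (U : Ω → β) (Z : Ω → γ) :
    MI p X Z = MI p (fun ω => (X ω, U ω)) Z - (H p (fun ω => (X ω, U ω)) - H p X) +
      condH p U (fun ω => (Z ω, X ω)) := by
  have hXUZ := H_comp_equiv p
    ⟨fun x => (x.1.2, (x.2, x.1.1)), fun y => ((y.2.2, y.1), y.2.1), fun _ => rfl, fun _ => rfl⟩
    (fun ω => ((X ω, U ω), Z ω))
  have hZX := H_comp_equiv p (Equiv.prodComm α γ) (fun ω => (X ω, Z ω))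
  simp only [MI, condH]
  simp only [Equiv.coe_fn_mk, Equiv.prodComm_apply, Prod.swap_prod_mk] at hXUZ hZX
  linarith

variable {p}

lemma dist_nonneg (hp : ∀ ω, 0 ≤ p ω) (X : Ω → α) (a : α) : 0 ≤ dist p X a :=
  Finset.sum_nonneg fun ω _ => by split_ifs; exacts [hp ω, le_rfl]

lemma dist_self_pos (hp : ∀ ω, 0 ≤ p ω) (X : Ω → α) {ω : Ω} (hω : p ω ≠ 0) :
    0 < dist p X (X ω) := by
  refine (hp ω).lt_of_ne' hω |>.trans_le ?_
  simpa [dist] using Finset.single_le_sum (f := fun ω' => if X ω' = X ω then p ω' else 0)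
    (fun ω' _ => by split_ifs; exacts [hp ω', le_rfl]) (Finset.mem_univ ω)

lemma dist_le_dist_comp [Fintype α] (hp : ∀ ω, 0 ≤ p ω) (X : Ω → α) (f : α → β) (a : α) :
    dist p X a ≤ dist p (fun ω => f (X ω)) (f a) := by
  rw [dist_comp p X f]
  refine le_of_eq_of_le (by simp) (Finset.single_le_sum (fun a' _ => ?_) (Finset.mem_univ a))
  exact mul_nonneg (dist_nonneg hp X a') (by split_ifs <;> norm_num)

lemma sum_mul_logb_le_sum_mul_logb [Fintype α] {q r : α → ℝ} (hq : ∀ a, 0 ≤ q a)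
    (hr : ∀ a, 0 ≤ r a) (hq1 : ∑ a, q a = 1) (hr1 : ∑ a, r a ≤ 1)
    (hsupp : ∀ a, 0 < q a → 0 < r a) :
    ∑ a, q a * Real.logb 2 (r a) ≤ ∑ a, q a * Real.logb 2 (q a) := by
  have hlog2 : 0 < Real.log 2 := Real.log_pos one_lt_two
  have key : ∀ a,
      q a * Real.logb 2 (r a) - q a * Real.logb 2 (q a) ≤ (r a - q a) / Real.log 2 := by
    intro a
    rcases (hq a).eq_or_lt with h | h
    · simpa [← h] using div_nonneg (hr a) hlog2.le
    have hra := hsupp a h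
    have hlog := Real.log_le_sub_one_of_pos (div_pos hra h)
    rw [Real.log_div hra.ne' h.ne'] at hlog
    calc q a * Real.logb 2 (r a) - q a * Real.logb 2 (q a)
        = q a * (Real.log (r a) - Real.log (q a)) / Real.log 2 := by
          simp only [Real.logb]; ring
      _ ≤ q a * (r a / q a - 1) / Real.log 2 := by gcongr
      _ = (r a - q a) / Real.log 2 := by field_simp
  have hsum := Finset.sum_le_sum fun a (_ : a ∈ Finset.univ) => key a
  rw [Finset.sum_sub_distrib, ← Finset.sum_div, Finset.sum_sub_distrib, hq1] at hsum
  linarith [div_nonpos_of_nonpos_of_nonneg (sub_nonpos.mpr hr1) hlog2.le]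

lemma H_le_sum_H_apply {ι 𝒵 : Type*} [Fintype ι] [DecidableEq ι] [Fintype 𝒵]
    (hp : ∀ ω, 0 ≤ p ω) (hp1 : ∑ ω, p ω = 1) (Z : Ω → ι → 𝒵) :
    H p Z ≤ ∑ i, H p (fun ω => Z ω i) := by
  set r : (ι → 𝒵) → ℝ := fun z => ∏ i, dist p (fun ω => Z ω i) (z i)
  have hr1 : ∑ z, r z = 1 := by
    simp [r, ← Fintype.prod_sum, sum_dist, hp1]
  have hsupp : ∀ z, 0 < dist p Z z → 0 < r z := fun z hz =>
    Finset.prod_pos fun i _ => hz.trans_le (dist_le_dist_comp hp Z (fun z => z i) z)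
  have hcross : ∑ z, dist p Z z * Real.logb 2 (r z) = -∑ i, H p (fun ω => Z ω i) := by
    rw [sum_dist_mul]
    simp only [H_eq_sum, mul_neg, Finset.sum_neg_distrib, neg_neg]
    rw [Finset.sum_comm]
    refine Finset.sum_congr rfl fun ω _ => ?_
    by_cases hω : p ω = 0
    · simp [hω]
    rw [Real.logb_prod _ _ fun i _ => (dist_self_pos hp (fun ω => Z ω i) hω).ne',
      Finset.mul_sum]
  have hgibbs := sum_mul_logb_le_sum_mul_logb (dist_nonneg hp Z)
    (fun z => Finset.prod_nonneg fun i _ => dist_nonneg hp _ _) ((sum_dist p Z).trans hp1)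
    hr1.le hsupp
  rw [H, Finset.sum_neg_distrib]
  linarith

lemma kernel_ne_zero (hp : ∀ ω, 0 ≤ p ω) {X : Ω → α} {Y : Ω → β} {κ : α → β → ℝ}
    (hκ : ∀ a b, dist p (fun ω => (X ω, Y ω)) (a, b) = dist p X a * κ a b) {ω : Ω}
    (hω : p ω ≠ 0) : κ (X ω) (Y ω) ≠ 0 :=
  right_ne_zero_of_mul (hκ (X ω) (Y ω) ▸ (dist_self_pos hp _ hω).ne')

lemma H_pair_sub_H_eq_sum [Fintype α] [Fintype β] (hp : ∀ ω, 0 ≤ p ω) {X : Ω → α}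
    {Y : Ω → β} {κ : α → β → ℝ}
    (hκ : ∀ a b, dist p (fun ω => (X ω, Y ω)) (a, b) = dist p X a * κ a b) :
    H p (fun ω => (X ω, Y ω)) - H p X = ∑ ω, p ω * -Real.logb 2 (κ (X ω) (Y ω)) := by
  rw [H_eq_sum, H_eq_sum, ← Finset.sum_sub_distrib]
  refine Finset.sum_congr rfl fun ω _ => ?_
  by_cases hω : p ω = 0
  · simp [hω]
  rw [hκ, Real.logb_mul (dist_self_pos hp X hω).ne' (kernel_ne_zero hp hκ hω)]
  ring

lemma H_pair_of_indep [Fintype α] [Fintype β] (hp : ∀ ω, 0 ≤ p ω) {X : Ω → α} {Y : Ω → β}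
    (h : ∀ a b, dist p (fun ω => (X ω, Y ω)) (a, b) = dist p X a * dist p Y b) :
    H p (fun ω => (X ω, Y ω)) = H p X + H p Y := by
  have := H_pair_sub_H_eq_sum hp (κ := fun _ b => dist p Y b) h
  rw [← H_eq_sum] at this
  linarith

lemma H_uniform [Fintype α] {X : Ω → α} {k : ℕ} (hcard : Fintype.card α = 2 ^ k)
    (hX : ∀ a, dist p X a = ((2 : ℝ) ^ k)⁻¹) : H p X = k := by
  have hlog : Real.logb 2 ((2 : ℝ) ^ k)⁻¹ = -k := by
    rw [Real.logb_inv, Real.logb_pow, Real.logb_self_eq_one one_lt_two, mul_one]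
  simp only [H, hX, hlog, Finset.sum_const, Finset.card_univ, hcard, nsmul_eq_mul]
  push_cast
  field_simp

section MemorylessChannel

variable {τ ι 𝒳 𝒵 : Type*} [Fintype τ] [Fintype ι] [DecidableEq ι] [Fintype 𝒵]

lemma sum_pi_ite_prod {f : ι → 𝒵 → ℝ} (hf : ∀ j, ∑ y, f j y = 1) (i : ι) (a : 𝒵) :
    ∑ z : ι → 𝒵, (if z i = a then ∏ j, f j (z j) else 0) = f i a := by
  set g : ι → 𝒵 → ℝ := fun j y => if j = i ∧ y ≠ a then 0 else f j y
  have hg : ∀ z : ι → 𝒵, (if z i = a then ∏ j, f j (z j) else 0) = ∏ j, g j (z j) := by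
    intro z
    split_ifs with h
    · exact Finset.prod_congr rfl fun j _ => by simp +contextual [g, h]
    · exact (Finset.prod_eq_zero (Finset.mem_univ i) (by simp [g, h])).symm
  rw [Finset.sum_congr rfl fun z _ => hg z, ← Fintype.prod_sum,
    Finset.prod_eq_single i (fun j _ hj => by simp [g, hj, hf j]) (by simp)]
  simp [g]

variable {W : 𝒳 → 𝒵 → ℝ} {T : Ω → τ} {enc : τ → ι → 𝒳} {Z : Ω → ι → 𝒵}

lemma dist_letter_pair (hW : IsChannel W)
    (hTZ : ∀ t z, dist p (fun ω => (T ω, Z ω)) (t, z) = dist p T t * ∏ i, W (enc t i) (z i))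
    (i : ι) (x : 𝒳) (z : 𝒵) :
    dist p (fun ω => (enc (T ω) i, Z ω i)) (x, z) = dist p (fun ω => enc (T ω) i) x * W x z := by
  rw [dist_comp p (fun ω => (T ω, Z ω)) fun tz => (enc tz.1 i, tz.2 i),
    dist_comp p T fun t => enc t i, Fintype.sum_prod_type, Finset.sum_mul]
  refine Finset.sum_congr rfl fun t _ => ?_
  by_cases ht : enc t i = x
  · have hrow := sum_pi_ite_prod (fun j => hW.2 (enc t j)) i z
    simp only [hTZ, ht, Prod.ext_iff, true_and, mul_ite, mul_one, mul_zero, if_true]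
    rw [← ht, ← hrow, Finset.mul_sum]
    simp only [mul_ite, mul_zero]
  · simp [ht]

lemma H_pair_sub_H_eq_sum_letters [Fintype 𝒳] (hp : ∀ ω, 0 ≤ p ω) (hW : IsChannel W)
    (hTZ : ∀ t z, dist p (fun ω => (T ω, Z ω)) (t, z) = dist p T t * ∏ i, W (enc t i) (z i)) :
    H p (fun ω => (T ω, Z ω)) - H p T =
      ∑ i, (H p (fun ω => (enc (T ω) i, Z ω i)) - H p fun ω => enc (T ω) i) := by
  have hletter : ∀ i, H p (fun ω => (enc (T ω) i, Z ω i)) - H p (fun ω => enc (T ω) i) =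
      ∑ ω, p ω * -Real.logb 2 (W (enc (T ω) i) (Z ω i)) := fun i =>
    H_pair_sub_H_eq_sum hp (dist_letter_pair hW hTZ i)
  rw [H_pair_sub_H_eq_sum hp hTZ, Finset.sum_congr rfl fun i _ => hletter i, Finset.sum_comm]
  refine Finset.sum_congr rfl fun ω _ => ?_
  by_cases hω : p ω = 0
  · simp [hω]
  have hfactor := Finset.prod_ne_zero_iff.mp (kernel_ne_zero hp hTZ hω)
  rw [Real.logb_prod _ _ hfactor, ← Finset.sum_neg_distrib, Finset.mul_sum]

lemma MI_le_sum_MI_letters [Fintype 𝒳] (hp : ∀ ω, 0 ≤ p ω) (hp1 : ∑ ω, p ω = 1)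
    (hW : IsChannel W)
    (hTZ : ∀ t z, dist p (fun ω => (T ω, Z ω)) (t, z) = dist p T t * ∏ i, W (enc t i) (z i)) :
    MI p T Z ≤ ∑ i, MI p (fun ω => enc (T ω) i) (fun ω => Z ω i) := by
  calc MI p T Z = H p Z - (H p (fun ω => (T ω, Z ω)) - H p T) := by rw [MI]; ring
    _ ≤ ∑ i, H p (fun ω => Z ω i) -
        ∑ i, (H p (fun ω => (enc (T ω) i, Z ω i)) - H p fun ω => enc (T ω) i) := by
      rw [H_pair_sub_H_eq_sum_letters hp hW hTZ]
      linarith [H_le_sum_H_apply hp hp1 Z]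
    _ = ∑ i, MI p (fun ω => enc (T ω) i) (fun ω => Z ω i) := by
      rw [← Finset.sum_sub_distrib]
      exact Finset.sum_congr rfl fun i _ => by rw [MI]; ring

lemma MI_le_card_mul_MI_slP [Fintype 𝒳] (hp : ∀ ω, 0 ≤ p ω) (hp1 : ∑ ω, p ω = 1)
    (hW : IsChannel W)
    (hTZ : ∀ t z, dist p (fun ω => (T ω, Z ω)) (t, z) = dist p T t * ∏ i, W (enc t i) (z i))
    {PX : 𝒳 → ℝ} (hmarg : ∀ i x, dist p (fun ω => enc (T ω) i) x = PX x) :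
    MI p T Z ≤ Fintype.card ι * MI (slP PX W) Prod.fst Prod.snd := by
  have hletter : ∀ i, MI p (fun ω => enc (T ω) i) (fun ω => Z ω i) =
      MI (slP PX W) Prod.fst Prod.snd := fun i =>
    MI_congr p fun ⟨x, z⟩ => by
      rw [dist_letter_pair hW hTZ, hmarg, dist]
      simp only [Prod.mk.eta]
      rw [Fintype.sum_eq_single (x, z) fun _ h => if_neg h, if_pos rfl]
      rfl
  calc MI p T Z ≤ ∑ i, MI p (fun ω => enc (T ω) i) (fun ω => Z ω i) :=
        MI_le_sum_MI_letters hp hp1 hW hTZ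
    _ = Fintype.card ι * MI (slP PX W) Prod.fst Prod.snd := by simp [hletter]

end MemorylessChannel

end Entropy

theorem leakage_upper_bound_general {Ω 𝒳 𝒵 : Type*} [Fintype Ω] [Fintype 𝒳]
    [Fintype 𝒵] (p : Ω → ℝ) (hp : IsPMF p)
    (K R N : ℕ)
    (M : Ω → (Fin K → ZMod 2)) (UR : Ω → (Fin R → ZMod 2))
    (X : Ω → Fin N → 𝒳) (Z : Ω → Fin N → 𝒵)
    (hUR : ∀ r, dist p UR r = ((2 : ℝ) ^ R)⁻¹)
    (hind : ∀ m r, dist p (fun ω => (M ω, UR ω)) (m, r) = dist p M m * dist p UR r)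
    (PX : 𝒳 → ℝ) (W₂ : 𝒳 → 𝒵 → ℝ)
    (hW₂ : IsChannel W₂)
    (enc : (Fin K → ZMod 2) → (Fin R → ZMod 2) → (Fin N → 𝒳))
    (hX : ∀ ω, X ω = enc (M ω) (UR ω))
    (hmem : ∀ m r z, dist p (fun ω => (M ω, UR ω, Z ω)) (m, r, z) =
      dist p (fun ω => (M ω, UR ω)) (m, r) * ∏ i, W₂ (enc m r i) (z i))
    (hmarg : ∀ i x, dist p (fun ω => X ω i) x = PX x)
    (c β' : ℝ)
    (hFano : condH p UR (fun ω => (Z ω, M ω)) ≤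
      h2 (c * 2 ^ (-((N : ℝ) ^ β'))) + c * R * 2 ^ (-((N : ℝ) ^ β'))) :
    MI p M Z ≤ N * MI (slP PX W₂) Prod.fst Prod.snd - R +
      h2 (c * 2 ^ (-((N : ℝ) ^ β'))) + c * R * 2 ^ (-((N : ℝ) ^ β')) := by
  obtain ⟨hp0, hp1⟩ := hp
  obtain rfl : X = fun ω => enc (M ω) (UR ω) := funext hX
  have hTZ : ∀ t z, dist p (fun ω => ((M ω, UR ω), Z ω)) (t, z) =
      dist p (fun ω => (M ω, UR ω)) t * ∏ i, W₂ (enc t.1 t.2 i) (z i) := fun t z =>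
    (dist_comp_equiv p (Equiv.prodAssoc _ _ _) _ (t.1, t.2, z)).symm.trans (hmem t.1 t.2 z)
  have hRbits : H p (fun ω => (M ω, UR ω)) - H p M = R := by
    rw [H_pair_of_indep hp0 hind, H_uniform (by simp) hUR]
    ring
  have hchannel := MI_le_card_mul_MI_slP hp0 hp1 hW₂ hTZ hmarg
  rw [Fintype.card_fin] at hchannel
  rw [MI_eq_MI_pair_sub_add_condH p M UR Z, hRbits]
  linarith

/-- **Information-leakage bound for the proposed coding scheme.**
Over a degraded wiretap channel (`W₂ ⪯ W₁`), with message bits `U_𝓐 = M`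
uniform on `{0,1}^K`, frozen bits `U_𝓕 = 0`, uniform random bits `U_𝓡`
independent of `M`, shaping bits `U_𝓓` determined by the other bits, codeword
`X = enc(M, U_𝓡)` sent over `N = 2^n` memoryless uses of `W₂` (each `X_i`
marginally `∼ P_X`), and assuming the conditional-entropy bound
`H(U_𝓡 | Z, M) ≤ h₂(c·2^{−N^{β′}}) + c·|𝓡|·2^{−N^{β′}}`
(`c > 0`, `0 < β′ < β < 1/2`), the leakage to Eve satisfies
`I(M; Z) ≤ N·I(X;Z) − |𝓡| + h₂(c·2^{−N^{β′}}) + c·|𝓡|·2^{−N^{β′}}`,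
where `(X, Z) ∼ P_X(x)·W₂(z|x)` is a single-letter input–output pair. -/
theorem leakage_upper_bound {Ω 𝒳 𝒴 𝒵 : Type*} [Fintype Ω] [Fintype 𝒳]
    [Fintype 𝒴] [Fintype 𝒵] (p : Ω → ℝ) (hp : IsPMF p)
    (K R F D n N : ℕ) (hN : N = 2 ^ n)
    (M : Ω → (Fin K → ZMod 2)) (UR : Ω → (Fin R → ZMod 2))
    (UF : Ω → (Fin F → ZMod 2)) (UD : Ω → (Fin D → ZMod 2))
    (X : Ω → Fin N → 𝒳) (Z : Ω → Fin N → 𝒵)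
    (hM : ∀ m, dist p M m = ((2 : ℝ) ^ K)⁻¹)
    (hUR : ∀ r, dist p UR r = ((2 : ℝ) ^ R)⁻¹)
    (hind : ∀ m r, dist p (fun ω => (M ω, UR ω)) (m, r) = dist p M m * dist p UR r)
    (hUF : ∀ ω, UF ω = 0)
    (g : (Fin K → ZMod 2) → (Fin R → ZMod 2) → (Fin D → ZMod 2))
    (hUD : ∀ ω, UD ω = g (M ω) (UR ω))
    (PX : 𝒳 → ℝ) (W₁ : 𝒳 → 𝒴 → ℝ) (W₂ : 𝒳 → 𝒵 → ℝ)
    (hPX : IsPMF PX) (hW₁ : IsChannel W₁) (hW₂ : IsChannel W₂)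
    (hdeg : Degraded W₂ W₁)
    (enc : (Fin K → ZMod 2) → (Fin R → ZMod 2) → (Fin N → 𝒳))
    (hX : ∀ ω, X ω = enc (M ω) (UR ω))
    (hmem : ∀ m r z, dist p (fun ω => (M ω, UR ω, Z ω)) (m, r, z) =
      dist p (fun ω => (M ω, UR ω)) (m, r) * ∏ i, W₂ (enc m r i) (z i))
    (hmarg : ∀ i x, dist p (fun ω => X ω i) x = PX x)
    (c β β' : ℝ) (hc : 0 < c) (hβ' : 0 < β') (hβ'β : β' < β) (hβ : β < 1 / 2)
    (hFano : condH p UR (fun ω => (Z ω, M ω)) ≤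
      h2 (c * 2 ^ (-((N : ℝ) ^ β'))) + c * R * 2 ^ (-((N : ℝ) ^ β'))) :
    MI p M Z ≤ N * MI (slP PX W₂) Prod.fst Prod.snd - R +
      h2 (c * 2 ^ (-((N : ℝ) ^ β'))) + c * R * 2 ^ (-((N : ℝ) ^ β')) :=
  leakage_upper_bound_general p hp K R N M UR X Z hUR hind PX W₂ hW₂ enc hX hmem hmarg c β' hFano

end PolarWiretap

end
end

section
/- Let 𝒱 and 𝒯 be finite sets, let a_v ≥ 0 and b_v ≥ 0 for v ∈ 𝒱, and let w(t|v) ≥ 0 satisfy ∑_{t∈𝒯} w(t|v) = 1 for every v ∈ 𝒱. Then ∑_{t∈𝒯} √(∑_{v∈𝒱} a_v·w(t|v)) · √(∑_{v∈𝒱} b_v·w(t|v)) ≥ ∑_{v∈𝒱} √(a_v·b_v). -/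
open scoped BigOperators

/-- **Cauchy–Schwarz step in the degradation inequality for the Bhattacharyya
parameter.**  For finite index sets `𝒱`, `𝒯`, nonnegative weights `a v`, `b v`,
and a stochastic matrix `w` (i.e. `w t v ≥ 0` and `∑ t, w t v = 1` for every `v`),
we have `∑ t, √(∑ v, a v * w t v) * √(∑ v, b v * w t v) ≥ ∑ v, √(a v * b v)`. -/
theorem degradation_cauchy_schwarz_step
    {𝒱 𝒯 : Type*} [Fintype 𝒱] [Fintype 𝒯]
    (a b : 𝒱 → ℝ) (ha : ∀ v, 0 ≤ a v) (hb : ∀ v, 0 ≤ b v)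
    (w : 𝒯 → 𝒱 → ℝ) (hw : ∀ t v, 0 ≤ w t v) (hw1 : ∀ v, ∑ t, w t v = 1) :
    ∑ v, Real.sqrt (a v * b v) ≤
      ∑ t, Real.sqrt (∑ v, a v * w t v) * Real.sqrt (∑ v, b v * w t v) := by
  have key : ∑ v, Real.sqrt (a v * b v)
      = ∑ t, ∑ v, Real.sqrt (a v * w t v) * Real.sqrt (b v * w t v) := by
    rw [Finset.sum_comm]
    refine Finset.sum_congr rfl fun v _ => ?_
    have : ∀ t, Real.sqrt (a v * w t v) * Real.sqrt (b v * w t v)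
        = Real.sqrt (a v * b v) * w t v := by
      intro t
      rw [Real.sqrt_mul (ha v), Real.sqrt_mul (hb v), Real.sqrt_mul (ha v)]
      have h := Real.sq_sqrt (hw t v)
      linear_combination Real.sqrt (a v) * Real.sqrt (b v) * h
    simp_rw [this, ← Finset.mul_sum, hw1, mul_one]
  rw [key]
  refine Finset.sum_le_sum fun t _ => ?_
  exact Real.sum_sqrt_mul_sqrt_le _ (fun v => mul_nonneg (ha v) (hw t v))
    (fun v => mul_nonneg (hb v) (hw t v))
end

section
/- Let 𝒳 ⊂ ℝ be a finite set such that the squared values {x² : x ∈ 𝒳} are not all equal. For ν ∈ ℝ define the Maxwell–Boltzmann distribution P_{X_ν}(x) = e^{−ν x²} / ∑_{x′∈𝒳} e^{−ν x′²}. Then the second moment E[|X_ν|²] = ∑_{x∈𝒳} x²·P_{X_ν}(x) is a strictly decreasing function of ν. -/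
open scoped BigOperators

/-- The second moment of the Maxwell–Boltzmann distribution with parameter `ν`
on the finite constellation `𝒳`:
`E[|X_ν|²] = ∑_{x ∈ 𝒳} x² · e^{−ν x²} / ∑_{x' ∈ 𝒳} e^{−ν x'²}`. -/
noncomputable def MBmoment (𝒳 : Finset ℝ) (ν : ℝ) : ℝ :=
  ∑ x ∈ 𝒳, x ^ 2 * (Real.exp (-ν * x ^ 2) / ∑ x' ∈ 𝒳, Real.exp (-ν * x' ^ 2))

/-- Sign lemma for the symmetrized term. -/
lemma MB_term_nonneg (ν₁ ν₂ p q : ℝ) (h : ν₁ < ν₂) :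
    0 ≤ (p - q) * (Real.exp (-ν₁ * p) * Real.exp (-ν₂ * q)
      - Real.exp (-ν₂ * p) * Real.exp (-ν₁ * q)) := by
  rw [← Real.exp_add, ← Real.exp_add]
  rcases lt_trichotomy p q with hpq | hpq | hpq
  · have h1 : -ν₁ * p + -ν₂ * q < -ν₂ * p + -ν₁ * q := by nlinarith
    have := Real.exp_lt_exp.mpr h1
    nlinarith
  · simp [hpq]
  · have h1 : -ν₂ * p + -ν₁ * q < -ν₁ * p + -ν₂ * q := by nlinarith
    have := Real.exp_lt_exp.mpr h1
    nlinarith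

lemma MB_term_pos (ν₁ ν₂ p q : ℝ) (h : ν₁ < ν₂) (hpq : p ≠ q) :
    0 < (p - q) * (Real.exp (-ν₁ * p) * Real.exp (-ν₂ * q)
      - Real.exp (-ν₂ * p) * Real.exp (-ν₁ * q)) := by
  rw [← Real.exp_add, ← Real.exp_add]
  rcases lt_or_gt_of_ne hpq with hpq | hpq
  · have h1 : -ν₁ * p + -ν₂ * q < -ν₂ * p + -ν₁ * q := by nlinarith
    have := Real.exp_lt_exp.mpr h1
    nlinarith
  · have h1 : -ν₂ * p + -ν₁ * q < -ν₁ * p + -ν₂ * q := by nlinarith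
    have := Real.exp_lt_exp.mpr h1
    nlinarith

/-- **Strict monotonicity of the second moment of the Maxwell–Boltzmann family.**
If `𝒳 ⊂ ℝ` is a finite set whose squared values are not all equal, then
`ν ↦ E[|X_ν|²]` is strictly decreasing on ℝ. -/
theorem MBmoment_strictAnti (𝒳 : Finset ℝ) (hne : 𝒳.Nonempty)
    (hsq : ∃ x ∈ 𝒳, ∃ y ∈ 𝒳, x ^ 2 ≠ y ^ 2) :
    StrictAnti (MBmoment 𝒳) := by
  intro ν₁ ν₂ hlt
  have Spos : ∀ ν : ℝ, 0 < ∑ x' ∈ 𝒳, Real.exp (-ν * x' ^ 2) :=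
    fun ν => Finset.sum_pos (fun x _ => Real.exp_pos _) hne
  have hMB : ∀ ν, MBmoment 𝒳 ν =
      (∑ x ∈ 𝒳, x ^ 2 * Real.exp (-ν * x ^ 2)) / (∑ x' ∈ 𝒳, Real.exp (-ν * x' ^ 2)) := by
    intro ν
    rw [MBmoment, Finset.sum_div]
    exact Finset.sum_congr rfl fun x _ => (mul_div_assoc _ _ _).symm
  rw [hMB, hMB, div_lt_div_iff₀ (Spos ν₂) (Spos ν₁)]
  rw [← sub_pos, Finset.sum_mul_sum, Finset.sum_mul_sum, ← Finset.sum_sub_distrib]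
  simp_rw [← Finset.sum_sub_distrib]
  set g : ℝ → ℝ → ℝ := fun x y =>
    x ^ 2 * Real.exp (-ν₁ * x ^ 2) * Real.exp (-ν₂ * y ^ 2)
      - x ^ 2 * Real.exp (-ν₂ * x ^ 2) * Real.exp (-ν₁ * y ^ 2) with hg
  have hgoal : (∑ x ∈ 𝒳, ∑ y ∈ 𝒳, g x y) + (∑ x ∈ 𝒳, ∑ y ∈ 𝒳, g x y)
      = ∑ x ∈ 𝒳, ∑ y ∈ 𝒳, (x ^ 2 - y ^ 2) *
        (Real.exp (-ν₁ * x ^ 2) * Real.exp (-ν₂ * y ^ 2)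
          - Real.exp (-ν₂ * x ^ 2) * Real.exp (-ν₁ * y ^ 2)) := by
    nth_rewrite 1 [Finset.sum_comm (s := 𝒳) (t := 𝒳) (f := fun x y => g x y)]
    rw [← Finset.sum_add_distrib]
    refine Finset.sum_congr rfl fun x _ => ?_
    rw [← Finset.sum_add_distrib]
    refine Finset.sum_congr rfl fun y _ => ?_
    simp only [hg]
    ring
  have hsum : 0 < ∑ x ∈ 𝒳, ∑ y ∈ 𝒳, (x ^ 2 - y ^ 2) *
      (Real.exp (-ν₁ * x ^ 2) * Real.exp (-ν₂ * y ^ 2)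
        - Real.exp (-ν₂ * x ^ 2) * Real.exp (-ν₁ * y ^ 2)) := by
    obtain ⟨x₀, hx₀, y₀, hy₀, hxy⟩ := hsq
    refine Finset.sum_pos' (fun x _ => Finset.sum_nonneg fun y _ =>
      MB_term_nonneg ν₁ ν₂ _ _ hlt) ⟨x₀, hx₀, ?_⟩
    refine Finset.sum_pos' (fun y _ => MB_term_nonneg ν₁ ν₂ _ _ hlt)
      ⟨y₀, hy₀, MB_term_pos ν₁ ν₂ _ _ hlt hxy⟩
  have : 0 < (∑ x ∈ 𝒳, ∑ y ∈ 𝒳, g x y) := by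
    nlinarith [hgoal, hsum]
  exact this
end
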